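/- Define operators e_{s,n+1} x^{(β)} = q^{-Σ_{i=s+1}^{n} β_i}[β_s+1](Σ_{i=1}^{n} θ(ε_i,β)[β_i]) x^{(β+ε_s)} and e_{n+1,s} x^{(β)} = −q^{Σ_{i=s+1}^{n} β_i} x^{(β−ε_s)}. Then their commutator satisfies [e_{s,n+1}, e_{n+1,s}] x^{(β)} = [β_s + Σ_{i=1}^{n} β_i] x^{(β)}, i.e., it acts as (K − K^{-1})/(q−q^{-1}) where K x^{(β)} = q^{β_s + Σ_{i=1}^{n}β_i} x^{(β)}. -/

import Mathlib

open Finset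

/-- The quantum integer `[m] := (q^m - q^{-m})/(q - q^{-1})` for `m : ℤ`. -/
def qint {K : Type*} [Field K] (q : K) (m : ℤ) : K :=
  (q ^ m - q ^ (-m)) / (q - q⁻¹)

/-- `θ(ε_k, β) = q^{Σ_{s>k} β_s - Σ_{s<k} β_s}`. -/
def thq {K : Type*} [Field K] (q : K) (n : ℕ) (β : ℕ → ℤ) (k : ℕ) : K :=
  q ^ ((∑ s ∈ Finset.Icc (k + 1) n, β s) - ∑ s ∈ Finset.Ico 1 k, β s)

/-- The `i`-th standard basis vector `ε_i`. -/
def eps (i : ℕ) : ℕ → ℤ := fun k => if k = i then 1 else 0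

/-! The sum `Σ_i θ(ε_i, β) [β_i]` telescopes to `[|β|]`, and the powers of `q` in the two operators
cancel because `Σ_{i>s} β_i` does not see `±ε_s`. So `e_{s,n+1} e_{n+1,s}` and `e_{n+1,s} e_{s,n+1}`
act on `x^{(β)}` by `-[β_s][|β| - 1]` and `-[β_s + 1][|β|]` (the first also when `β_s = 0`, as
`[0] = 0`), and the identity `[a + m] = [a + 1][m] - [a][m - 1]` finishes. -/

lemma qint_zero {K : Type*} [Field K] (q : K) : qint q 0 = 0 := by
  simp [qint]

lemma qint_add_eq_mul_sub_mul {K : Type*} [Field K] {q : K} (hq : q ≠ 0) (a m : ℤ) :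
    qint q (a + m) = qint q (a + 1) * qint q m - qint q a * qint q (m - 1) := by
  rcases eq_or_ne (q - q⁻¹) 0 with hc | hc
  · simp [qint, hc]
  · have hc' : q ^ 2 - 1 ≠ 0 := by
      contrapose! hc; field_simp; linear_combination hc
    simp only [qint, neg_add, zpow_add₀ hq, zpow_sub₀ hq, zpow_neg, zpow_one]
    field_simp
    ring

lemma sum_thq_mul_qint {K : Type*} [Field K] {q : K} (hq : q ≠ 0) (n : ℕ) (β : ℕ → ℤ) :
    ∑ i ∈ Icc 1 n, thq q n β i * qint q (β i) = qint q (∑ i ∈ Icc 1 n, β i) := by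
  set a : ℕ → ℤ := fun j ↦ ∑ t ∈ Ico j (n + 1), β t - ∑ t ∈ Ico 1 j, β t
  have hterm : ∀ i ∈ Ico 1 (n + 1),
      thq q n β i * qint q (β i) = (q ^ a i - q ^ a (i + 1)) / (q - q⁻¹) := by
    intro i hi
    obtain ⟨hi1, hin⟩ := mem_Ico.mp hi
    have hupper : ∑ t ∈ Ico i (n + 1), β t = β i + ∑ t ∈ Ico (i + 1) (n + 1), β t :=
      sum_eq_sum_Ico_succ_bot hin β
    have hlower : ∑ t ∈ Ico 1 (i + 1), β t = ∑ t ∈ Ico 1 i, β t + β i :=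
      sum_Ico_succ_top hi1 β
    simp only [thq, qint, a, hupper, hlower, ← Ico_add_one_right_eq_Icc, mul_div_assoc', mul_sub,
      ← zpow_add₀ hq]
    ring_nf
  rw [← Ico_add_one_right_eq_Icc, sum_congr rfl hterm, ← sum_div]
  have htelescope := sum_Ico_sub (fun j ↦ -q ^ a j) (by omega : 1 ≤ n + 1)
  simp only [neg_sub_neg] at htelescope
  simp [htelescope, a, qint]

lemma eps_apply_self (s : ℕ) : eps s s = 1 := if_pos rfl

lemma eps_nonneg (s k : ℕ) : 0 ≤ eps s k := by
  unfold eps; split_ifs <;> omega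

lemma sum_eps (S : Finset ℕ) (s : ℕ) : ∑ i ∈ S, eps s i = if s ∈ S then 1 else 0 :=
  sum_ite_eq' S s fun _ ↦ 1

lemma sum_add_eps (S : Finset ℕ) (β : ℕ → ℤ) (s : ℕ) :
    ∑ i ∈ S, (β + eps s) i = ∑ i ∈ S, β i + if s ∈ S then 1 else 0 := by
  rw [← sum_eps, ← sum_add_distrib]; rfl

lemma sum_sub_eps (S : Finset ℕ) (β : ℕ → ℤ) (s : ℕ) :
    ∑ i ∈ S, (β - eps s) i = ∑ i ∈ S, β i - if s ∈ S then 1 else 0 := by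
  rw [← sum_eps, ← sum_sub_distrib]; rfl

lemma sub_eps_apply_nonneg {β : ℕ → ℤ} {s k : ℕ} (hk : 0 ≤ β k) (hs : 0 < β s) :
    0 ≤ (β - eps s) k := by
  by_cases h : k = s
  · subst h
    simp only [Pi.sub_apply, eps_apply_self]
    omega
  · simp [eps, h, hk]

theorem e_s_nplus1_commutator_general {K V : Type*} [Field K] [AddCommGroup V] [Module K V]
    (q : K) (hq0 : q ≠ 0) (n s : ℕ) (hs1 : 1 ≤ s) (hs2 : s ≤ n)
    (X : (ℕ → ℤ) → V)
    (hX0 : ∀ β : ℕ → ℤ, (∃ k ∈ Finset.Icc 1 n, β k < 0) → X β = 0)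
    (A B : Module.End K V)
    (hA : ∀ β : ℕ → ℤ, (∀ k ∈ Finset.Icc 1 n, 0 ≤ β k) →
      A (X β) = (q ^ (-(∑ i ∈ Finset.Icc (s + 1) n, β i)) * qint q (β s + 1) *
          ∑ i ∈ Finset.Icc 1 n, thq q n β i * qint q (β i)) • X (β + eps s))
    (hB : ∀ β : ℕ → ℤ, (∀ k ∈ Finset.Icc 1 n, 0 ≤ β k) →
      B (X β) = -(q ^ (∑ i ∈ Finset.Icc (s + 1) n, β i)) • X (β - eps s)) :
    ∀ β : ℕ → ℤ, (∀ k ∈ Finset.Icc 1 n, 0 ≤ β k) →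
      (A * B - B * A) (X β) = qint q (β s + ∑ i ∈ Finset.Icc 1 n, β i) • X β := by
  intro β hβ
  have hs : s ∈ Icc 1 n := mem_Icc.mpr ⟨hs1, hs2⟩
  have hs' : s ∉ Icc (s + 1) n := by simp
  have hBA : B (A (X β)) = -(qint q (β s + 1) * qint q (∑ i ∈ Icc 1 n, β i)) • X β := by
    rw [hA β hβ, map_smul, hB (β + eps s) fun k hk ↦ add_nonneg (hβ k hk) (eps_nonneg s k),
      sum_thq_mul_qint hq0, sum_add_eps, if_neg hs', add_zero, add_sub_cancel_right, smul_smul]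
    congr 1
    rw [zpow_neg]
    field_simp
  have hAB : A (B (X β)) = -(qint q (β s) * qint q (∑ i ∈ Icc 1 n, β i - 1)) • X β := by
    rcases (hβ s hs).eq_or_lt with h0 | hpos
    · rw [hB β hβ, hX0 _ ⟨s, hs, by simp [eps_apply_self, ← h0]⟩, ← h0, qint_zero]
      simp
    · rw [hB β hβ, map_smul, hA (β - eps s) fun k hk ↦ sub_eps_apply_nonneg (hβ k hk) hpos,
        sum_thq_mul_qint hq0, sum_sub_eps, sum_sub_eps, if_neg hs', if_pos hs, sub_zero,
        sub_add_cancel, smul_smul]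
      congr 1
      simp only [Pi.sub_apply, eps_apply_self, sub_add_cancel, zpow_neg]
      field_simp
  rw [LinearMap.sub_apply, Module.End.mul_apply, Module.End.mul_apply, hAB, hBA, ← sub_smul,
    qint_add_eq_mul_sub_mul hq0 (β s) (∑ i ∈ Icc 1 n, β i)]
  congr 1
  ring

theorem e_s_nplus1_commutator {K V : Type*} [Field K] [AddCommGroup V] [Module K V]
    (q : K) (hq0 : q ≠ 0) (hq1 : q ≠ 1) (hqm : q ≠ -1) (n s : ℕ) (hs1 : 1 ≤ s) (hs2 : s ≤ n)
    (X : (ℕ → ℤ) → V)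
    (hX0 : ∀ β : ℕ → ℤ, (∃ k ∈ Finset.Icc 1 n, β k < 0) → X β = 0)
    (A B : Module.End K V)
    (hA : ∀ β : ℕ → ℤ, (∀ k ∈ Finset.Icc 1 n, 0 ≤ β k) →
      A (X β) = (q ^ (-(∑ i ∈ Finset.Icc (s + 1) n, β i)) * qint q (β s + 1) *
          ∑ i ∈ Finset.Icc 1 n, thq q n β i * qint q (β i)) • X (β + eps s))
    (hB : ∀ β : ℕ → ℤ, (∀ k ∈ Finset.Icc 1 n, 0 ≤ β k) →
      B (X β) = -(q ^ (∑ i ∈ Finset.Icc (s + 1) n, β i)) • X (β - eps s)) :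
    ∀ β : ℕ → ℤ, (∀ k ∈ Finset.Icc 1 n, 0 ≤ β k) →
      (A * B - B * A) (X β) = qint q (β s + ∑ i ∈ Finset.Icc 1 n, β i) • X β :=
  e_s_nplus1_commutator_general q hq0 n s hs1 hs2 X hX0 A B hA hB
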